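/- Let n₁, n₂, m, k be natural numbers. Let G₁ be an n₁×m and G₂ an n₂×m complex matrix, let Q₁ (n₁×k) and Q₂ (n₂×k) be complex matrices with Q₁ᴴ Q₁ = I and Q₂ᴴ Q₂ = I, let E₁, E₂ be k×k complex matrices, and let ε₁, ε₂, ε ≥ 0. Define G := fromRows G₁ G₂, Q := fromRows (Q₁ E₁) (Q₂ E₂), Ĝ := fromRows (Q₁ᴴ G₁) (Q₂ᴴ G₂), and Q̂ := fromRows E₁ E₂. If ‖G₁ − Q₁ Q₁ᴴ G₁‖_F ≤ ε₁, ‖G₂ − Q₂ Q₂ᴴ G₂‖_F ≤ ε₂, and ‖Ĝ − Q̂ Q̂ᴴ Ĝ‖_F ≤ ε, then ‖G − Q Qᴴ G‖_F² ≤ ε₁² + ε₂² + ε². -/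

import Mathlib

open Matrix

/-- The Frobenius norm of a complex matrix. -/
noncomputable def frobNorm {α β : Type*} [Fintype α] [Fintype β] (A : Matrix α β ℂ) : ℝ :=
  Real.sqrt (∑ i, ∑ j, ‖A i j‖ ^ 2)

/-!
Write `V` for the block-diagonal isometry `diag(Q₁, Q₂)`, so that `Q = V Q̂` and `Ĝ = Vᴴ G`.
Then `G - Q Qᴴ G = (G - V Vᴴ G) + V (Ĝ - Q̂ Q̂ᴴ Ĝ)`, and the two summands are orthogonal since
`(G - V Vᴴ G)ᴴ V = 0`. Pythagoras and the invariance of the Frobenius norm under the isometry `V`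
give `‖G - Q Qᴴ G‖² = ‖G - V Vᴴ G‖² + ‖Ĝ - Q̂ Q̂ᴴ Ĝ‖²`, and the first term splits over the two
row blocks into `‖G₁ - Q₁ Q₁ᴴ G₁‖² + ‖G₂ - Q₂ Q₂ᴴ G₂‖²`.
-/

section FrobeniusNorm

variable {α β γ : Type*} [Fintype α] [Fintype β] [Fintype γ]

lemma frobNorm_nonneg (A : Matrix α β ℂ) : 0 ≤ frobNorm A :=
  Real.sqrt_nonneg _

lemma frobNorm_sq (A : Matrix α β ℂ) : frobNorm A ^ 2 = ∑ i, ∑ j, ‖A i j‖ ^ 2 :=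
  Real.sq_sqrt (by positivity)

lemma frobNorm_sq_eq_re_trace (A : Matrix α β ℂ) :
    frobNorm A ^ 2 = (Aᴴ * A).trace.re := by
  rw [frobNorm_sq, Finset.sum_comm]
  simp only [trace, diag, mul_apply, conjTranspose_apply, Complex.re_sum, Complex.star_def,
    mul_comm (starRingEnd ℂ _), Complex.mul_conj, Complex.normSq_eq_norm_sq, Complex.ofReal_re]

lemma frobNorm_fromRows_sq (A : Matrix α γ ℂ) (B : Matrix β γ ℂ) :
    frobNorm (fromRows A B) ^ 2 = frobNorm A ^ 2 + frobNorm B ^ 2 := by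
  simp only [frobNorm_sq, Fintype.sum_sum_type, fromRows_apply_inl, fromRows_apply_inr]

lemma frobNorm_add_sq_of_conjTranspose_mul_eq_zero (X Y : Matrix α β ℂ)
    (h : Xᴴ * Y = 0) : frobNorm (X + Y) ^ 2 = frobNorm X ^ 2 + frobNorm Y ^ 2 := by
  have h' : Yᴴ * X = 0 := by simpa using congrArg conjTranspose h
  simp only [frobNorm_sq_eq_re_trace, conjTranspose_add, Matrix.add_mul, Matrix.mul_add, h, h',
    add_zero, zero_add, trace_add, Complex.add_re]

lemma frobNorm_mul_of_conjTranspose_mul_self [DecidableEq β]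
    {V : Matrix α β ℂ} (hV : Vᴴ * V = 1) (R : Matrix β γ ℂ) : frobNorm (V * R) = frobNorm R := by
  rw [← sq_eq_sq₀ (frobNorm_nonneg _) (frobNorm_nonneg _), frobNorm_sq_eq_re_trace,
    frobNorm_sq_eq_re_trace, conjTranspose_mul, Matrix.mul_assoc, ← Matrix.mul_assoc Vᴴ, hV,
    Matrix.one_mul]

lemma frobNorm_sq_le_of_le {A : Matrix α β ℂ} {ε : ℝ} (h : frobNorm A ≤ ε) :
    frobNorm A ^ 2 ≤ ε ^ 2 :=
  pow_le_pow_left₀ (frobNorm_nonneg A) h 2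

end FrobeniusNorm

section Projection

variable {α β γ δ : Type*} [Fintype α] [Fintype β] [DecidableEq β]

lemma conjTranspose_sub_projection_mul_eq_zero {V : Matrix α β ℂ} (hV : Vᴴ * V = 1)
    (G : Matrix α δ ℂ) : (G - V * Vᴴ * G)ᴴ * V = 0 := by
  rw [conjTranspose_sub, Matrix.sub_mul, conjTranspose_mul, conjTranspose_mul,
    conjTranspose_conjTranspose, Matrix.mul_assoc, Matrix.mul_assoc, hV, Matrix.mul_one,
    sub_self]

theorem frobNorm_sub_nested_projection_sq [Fintype γ] [Fintype δ] {V : Matrix α β ℂ}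
    (hV : Vᴴ * V = 1) (Qhat : Matrix β γ ℂ) (G : Matrix α δ ℂ) :
    frobNorm (G - V * Qhat * (V * Qhat)ᴴ * G) ^ 2 =
      frobNorm (G - V * Vᴴ * G) ^ 2 + frobNorm (Vᴴ * G - Qhat * Qhatᴴ * (Vᴴ * G)) ^ 2 := by
  have hsplit : G - V * Qhat * (V * Qhat)ᴴ * G =
      (G - V * Vᴴ * G) + V * (Vᴴ * G - Qhat * Qhatᴴ * (Vᴴ * G)) := by
    simp only [conjTranspose_mul, Matrix.mul_sub, Matrix.mul_assoc]
    abel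
  have horth : (G - V * Vᴴ * G)ᴴ * (V * (Vᴴ * G - Qhat * Qhatᴴ * (Vᴴ * G))) = 0 := by
    rw [← Matrix.mul_assoc, conjTranspose_sub_projection_mul_eq_zero hV, Matrix.zero_mul]
  rw [hsplit, frobNorm_add_sq_of_conjTranspose_mul_eq_zero _ _ horth,
    frobNorm_mul_of_conjTranspose_mul_self hV]

end Projection

section BlockMatrices

variable {R m₁ m₂ n₁ n₂ n : Type*}

lemma fromRows_sub_fromRows [Sub R] (A₁ B₁ : Matrix m₁ n R) (A₂ B₂ : Matrix m₂ n R) :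
    fromRows A₁ A₂ - fromRows B₁ B₂ = fromRows (A₁ - B₁) (A₂ - B₂) := by
  ext (_ | _) _ <;> rfl

lemma fromBlocks_diag_mul_fromRows [Semiring R] [Fintype n₁] [Fintype n₂]
    (A₁ : Matrix m₁ n₁ R) (A₂ : Matrix m₂ n₂ R) (B₁ : Matrix n₁ n R) (B₂ : Matrix n₂ n R) :
    fromBlocks A₁ 0 0 A₂ * fromRows B₁ B₂ = fromRows (A₁ * B₁) (A₂ * B₂) := by
  rw [fromBlocks_mul_fromRows, Matrix.zero_mul, Matrix.zero_mul, add_zero, zero_add]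

lemma conjTranspose_fromBlocks_diag_mul_self [Semiring R] [StarRing R] [Fintype m₁]
    [Fintype m₂] [DecidableEq n₁] [DecidableEq n₂] {Q₁ : Matrix m₁ n₁ R} {Q₂ : Matrix m₂ n₂ R}
    (hQ₁ : Q₁ᴴ * Q₁ = 1) (hQ₂ : Q₂ᴴ * Q₂ = 1) :
    (fromBlocks Q₁ 0 0 Q₂)ᴴ * fromBlocks Q₁ 0 0 Q₂ = 1 := by
  rw [fromBlocks_conjTranspose, fromBlocks_multiply]
  simp [hQ₁, hQ₂]

end BlockMatrices

theorem nested_basis_error_bound_general (n₁ n₂ m k : ℕ)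
    (G₁ : Matrix (Fin n₁) (Fin m) ℂ) (G₂ : Matrix (Fin n₂) (Fin m) ℂ)
    (Q₁ : Matrix (Fin n₁) (Fin k) ℂ) (Q₂ : Matrix (Fin n₂) (Fin k) ℂ)
    (E₁ E₂ : Matrix (Fin k) (Fin k) ℂ)
    (ε₁ ε₂ ε : ℝ)
    (hQ₁ : Q₁ᴴ * Q₁ = 1) (hQ₂ : Q₂ᴴ * Q₂ = 1) :
    let G := Matrix.fromRows G₁ G₂
    let Q := Matrix.fromRows (Q₁ * E₁) (Q₂ * E₂)
    let Ghat := Matrix.fromRows (Q₁ᴴ * G₁) (Q₂ᴴ * G₂)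
    let Qhat := Matrix.fromRows E₁ E₂
    frobNorm (G₁ - Q₁ * Q₁ᴴ * G₁) ≤ ε₁ →
    frobNorm (G₂ - Q₂ * Q₂ᴴ * G₂) ≤ ε₂ →
    frobNorm (Ghat - Qhat * Qhatᴴ * Ghat) ≤ ε →
    frobNorm (G - Q * Qᴴ * G) ^ 2 ≤ ε₁ ^ 2 + ε₂ ^ 2 + ε ^ 2 := by
  intro G Q Ghat Qhat h₁ h₂ h
  set V := fromBlocks Q₁ 0 0 Q₂
  have hV : Vᴴ * V = 1 := conjTranspose_fromBlocks_diag_mul_self hQ₁ hQ₂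
  have hQ : Q = V * Qhat := (fromBlocks_diag_mul_fromRows _ _ _ _).symm
  have hGhat : Ghat = Vᴴ * G := by
    rw [fromBlocks_conjTranspose, conjTranspose_zero, conjTranspose_zero,
      fromBlocks_diag_mul_fromRows]
  have hsons : G - V * Vᴴ * G = fromRows (G₁ - Q₁ * Q₁ᴴ * G₁) (G₂ - Q₂ * Q₂ᴴ * G₂) := by
    rw [Matrix.mul_assoc, ← hGhat, fromBlocks_diag_mul_fromRows, fromRows_sub_fromRows,
      Matrix.mul_assoc, Matrix.mul_assoc]
  rw [hQ, frobNorm_sub_nested_projection_sq hV, ← hGhat, hsons, frobNorm_fromRows_sq]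
  gcongr ?_ + ?_ + ?_ <;> exact frobNorm_sq_le_of_le ‹_›

/-- Induction step of the error estimate for the compression algorithm
(Theorem 6.1): the total error of the nested basis is bounded by the squared
sum of the sons' errors and the tolerance achieved for the condensed matrix. -/
theorem nested_basis_error_bound (n₁ n₂ m k : ℕ)
    (G₁ : Matrix (Fin n₁) (Fin m) ℂ) (G₂ : Matrix (Fin n₂) (Fin m) ℂ)
    (Q₁ : Matrix (Fin n₁) (Fin k) ℂ) (Q₂ : Matrix (Fin n₂) (Fin k) ℂ)
    (E₁ E₂ : Matrix (Fin k) (Fin k) ℂ)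
    (ε₁ ε₂ ε : ℝ) (hε₁ : 0 ≤ ε₁) (hε₂ : 0 ≤ ε₂) (hε : 0 ≤ ε)
    (hQ₁ : Q₁ᴴ * Q₁ = 1) (hQ₂ : Q₂ᴴ * Q₂ = 1) :
    let G := Matrix.fromRows G₁ G₂
    let Q := Matrix.fromRows (Q₁ * E₁) (Q₂ * E₂)
    let Ghat := Matrix.fromRows (Q₁ᴴ * G₁) (Q₂ᴴ * G₂)
    let Qhat := Matrix.fromRows E₁ E₂
    frobNorm (G₁ - Q₁ * Q₁ᴴ * G₁) ≤ ε₁ →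
    frobNorm (G₂ - Q₂ * Q₂ᴴ * G₂) ≤ ε₂ →
    frobNorm (Ghat - Qhat * Qhatᴴ * Ghat) ≤ ε →
    frobNorm (G - Q * Qᴴ * G) ^ 2 ≤ ε₁ ^ 2 + ε₂ ^ 2 + ε ^ 2 :=
  nested_basis_error_bound_general n₁ n₂ m k G₁ G₂ Q₁ Q₂ E₁ E₂ ε₁ ε₂ ε hQ₁ hQ₂
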